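/- arXiv:math/9911086 — 3 statements merged into one kernel-verified Lean document; each statement's English description precedes it below -/
import Mathlib

section
/- Let M(z) be an n×n matrix-valued function of the form M(z) = z I_n + (1+z²) G(z), where G(z)_{j,j'} = ⟨u_j, (A_1 − z)^{-1} u_{j'}⟩ for a self-adjoint operator A_1 and orthonormal vectors u_1,…,u_n. Then M is a matrix-valued Herglotz function: for z in the open upper half-plane, Im(M(z)) = (M(z) − M(z)*)/(2i) is positive semidefinite; moreover Im(M(z)) = Im(z)·(⟨u_j(z̄), u_{j'}(z̄)⟩)_{j,j'} where u_j(z) = (A_1 − i)(A_1 − z)^{-1} u_j, hence Im(M(z)) is positive definite whenever the u_j(z̄) are linearly independent. -/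
open Complex Matrix

open scoped ComplexConjugate ComplexOrder


lemma gram_dot {H : Type*} [NormedAddCommGroup H] [InnerProductSpace ℂ H] {n : ℕ}
    (c : ℝ) (v : Fin n → H) (x : Fin n → ℂ) :
    star x ⬝ᵥ (Matrix.of fun j j' => (c : ℂ) * (inner ℂ (v j) (v j') : ℂ)).mulVec x
      = (c : ℂ) * (inner ℂ (∑ j, x j • v j) (∑ j, x j • v j) : ℂ) := by
  simp only [dotProduct, mulVec, Matrix.of_apply, Pi.star_apply, RCLike.star_def,
    inner_sum, sum_inner, inner_smul_left, inner_smul_right, Finset.mul_sum]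
  rw [Finset.sum_comm]
  congr 1; ext j; congr 1; ext j'; ring

lemma gram_herm {H : Type*} [NormedAddCommGroup H] [InnerProductSpace ℂ H] {n : ℕ}
    (c : ℝ) (v : Fin n → H) :
    (Matrix.of fun j j' => (c : ℂ) * (inner ℂ (v j) (v j') : ℂ)).IsHermitian := by
  ext j j'
  simp [Matrix.conjTranspose_apply, inner_conj_symm, Complex.conj_ofReal]

lemma gram_psd {H : Type*} [NormedAddCommGroup H] [InnerProductSpace ℂ H] {n : ℕ}
    (c : ℝ) (hc : 0 ≤ c) (v : Fin n → H) :
    (Matrix.of fun j j' => (c : ℂ) * (inner ℂ (v j) (v j') : ℂ)).PosSemidef := by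
  refine Matrix.PosSemidef.of_dotProduct_mulVec_nonneg (gram_herm c v) (fun x => ?_)
  rw [gram_dot, inner_self_eq_norm_sq_to_K]
  exact mul_nonneg (by exact_mod_cast hc) (pow_nonneg (RCLike.ofReal_nonneg.mpr (norm_nonneg _)) 2)

lemma gram_pd {H : Type*} [NormedAddCommGroup H] [InnerProductSpace ℂ H] {n : ℕ}
    (c : ℝ) (hc : 0 < c) (v : Fin n → H) (hv : LinearIndependent ℂ v) :
    (Matrix.of fun j j' => (c : ℂ) * (inner ℂ (v j) (v j') : ℂ)).PosDef := by
  refine Matrix.PosDef.of_dotProduct_mulVec_pos (gram_herm c v) (fun x hx => ?_)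
  rw [gram_dot, inner_self_eq_norm_sq_to_K]
  have hw : (∑ j, x j • v j) ≠ 0 := by
    intro h
    exact hx (funext fun j => (Fintype.linearIndependent_iff.mp hv x h) j)
  exact mul_pos (by exact_mod_cast hc) (pow_pos (RCLike.ofReal_pos.mpr (norm_pos_iff.mpr hw)) 2)


lemma isUnit_sub_smul_one {H : Type*} [NormedAddCommGroup H] [InnerProductSpace ℂ H]
    [CompleteSpace H] (A₁ : H →L[ℂ] H) (hA₁ : IsSelfAdjoint A₁) (w : ℂ) (hw : w.im ≠ 0) :
    IsUnit (A₁ - w • (1 : H →L[ℂ] H)) := by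
  have hns : w ∉ spectrum ℂ A₁ := by
    intro h
    have := hA₁.mem_spectrum_eq_re h
    apply hw
    rw [this]
    simp
  have h1 := spectrum.notMem_iff.mp hns
  rw [Algebra.algebraMap_eq_smul_one] at h1
  simpa [neg_sub] using h1.neg

lemma oper_identity {E : Type*} [Ring E] [Algebra ℂ E] (A₁ : E) (z w : ℂ) :
    (z - w) • ((A₁ - z • (1:E)) * (A₁ - w • (1:E))) + (1 + z ^ 2) • (A₁ - w • (1:E))
      - (1 + w ^ 2) • (A₁ - z • (1:E)) = (z - w) • (A₁ * A₁ + 1) := by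
  have expand : (A₁ - z • (1:E)) * (A₁ - w • (1:E))
      = A₁ * A₁ - w • A₁ - z • A₁ + (z * w) • (1:E) := by
    simp only [mul_sub, sub_mul, smul_mul_assoc, mul_smul_comm, smul_smul, mul_one, one_mul]
    module
  rw [expand]
  match_scalars <;> ring <;> ring

lemma BstarB_identity {E : Type*} [Ring E] [Algebra ℂ E] (A₁ : E) :
    (A₁ + I • (1:E)) * (A₁ - I • (1:E)) = A₁ * A₁ + 1 := by
  simp only [mul_sub, add_mul, smul_mul_assoc, mul_smul_comm, smul_smul, mul_one, one_mul]
  match_scalars <;> simp [Complex.I_sq] 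

/-- The matrix `M(z) = z Iₙ + (1+z²)(⟨u_j,(A₁-z)⁻¹u_{j'}⟩)` built from a self-adjoint
operator `A₁` and orthonormal vectors `u_j` is a matrix-valued Herglotz function:
for `Im z > 0`, `Im M(z) ⩾ 0`; in fact `Im M(z) = Im(z) · (⟨u_j(z̄), u_{j'}(z̄)⟩)` with
`u_j(z) = (A₁ - i)(A₁ - z)⁻¹ u_j`, so `Im M(z) > 0` when the `u_j(z̄)` are linearly
independent. -/
theorem herglotz_property_of_M {H : Type*} [NormedAddCommGroup H]
    [InnerProductSpace ℂ H] [CompleteSpace H]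
    (A₁ : H →L[ℂ] H) (hA₁ : IsSelfAdjoint A₁) {n : ℕ}
    (u : Fin n → H) (hu : Orthonormal ℂ u)
    (z : ℂ) (hz : 0 < z.im) :
    let Res : ℂ → (H →L[ℂ] H) := fun w => Ring.inverse (A₁ - w • (1 : H →L[ℂ] H))
    let uz : ℂ → Fin n → H := fun w j => (A₁ - I • (1 : H →L[ℂ] H)) (Res w (u j))
    let M : Matrix (Fin n) (Fin n) ℂ := Matrix.of fun j j' =>
      z * (if j = j' then 1 else 0) + (1 + z ^ 2) * @inner ℂ H _ (u j) (Res z (u j'))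
    let ImM : Matrix (Fin n) (Fin n) ℂ := (2 * I)⁻¹ • (M - Mᴴ)
    ImM.PosSemidef ∧
      ImM = Matrix.of (fun j j' =>
        (z.im : ℂ) * @inner ℂ H _ (uz (conj z) j) (uz (conj z) j')) ∧
      (LinearIndependent ℂ (uz (conj z)) → ImM.PosDef) := by
  intro Res uz M ImM
  set z' : ℂ := conj z with hz'def
  have hzim : z.im ≠ 0 := ne_of_gt hz
  have hz'im : z'.im ≠ 0 := by simp [hz'def, hzim]
  -- the two resolvents
  set T : H →L[ℂ] H := A₁ - z • (1 : H →L[ℂ] H) with hTdef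
  set T' : H →L[ℂ] H := A₁ - z' • (1 : H →L[ℂ] H) with hT'def
  have hT : IsUnit T := isUnit_sub_smul_one A₁ hA₁ z hzim
  have hT' : IsUnit T' := isUnit_sub_smul_one A₁ hA₁ z' hz'im
  set R : H →L[ℂ] H := Ring.inverse T with hRdef
  set R' : H →L[ℂ] H := Ring.inverse T' with hR'def
  have hResz : Res z = R := rfl
  have hResz' : Res z' = R' := rfl
  have hstarT : star T = T' := by
    simp [hTdef, hT'def, star_sub, star_smul, hA₁.star_eq, hz'def]
  have hstarT' : star T' = T := by
    rw [← hstarT, star_star]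
  have hRR' : star R = R' := by
    rw [hRdef, hR'def, ← hstarT, Ring.inverse_star]
  have hR'R : star R' = R := by
    rw [← hRR', star_star]
  have hTR : T * R = 1 := Ring.mul_inverse_cancel T hT
  have hRT : R * T = 1 := Ring.inverse_mul_cancel T hT
  have hT'R' : T' * R' = 1 := Ring.mul_inverse_cancel T' hT'
  have hR'T' : R' * T' = 1 := Ring.inverse_mul_cancel T' hT'
  -- key operator identity
  have key : (z - z') • (1 : H →L[ℂ] H) + (1 + z ^ 2) • R - (1 + z' ^ 2) • R'
      = (z - z') • (R * (A₁ * A₁ + 1) * R') := by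
    have cancel : ∀ {X Y : H →L[ℂ] H}, T * X * T' = T * Y * T' → X = Y := by
      intro X Y h
      have h2 := congrArg (fun W => R * W * R') h
      simp only [← mul_assoc] at h2
      rw [hRT, one_mul, one_mul, mul_assoc, mul_assoc, hT'R', mul_one, mul_one] at h2
      exact h2
    apply cancel
    have lhs : T * ((z - z') • (1 : H →L[ℂ] H) + (1 + z ^ 2) • R - (1 + z' ^ 2) • R') * T'
        = (z - z') • (T * T') + (1 + z ^ 2) • T' - (1 + z' ^ 2) • T := by
      simp only [mul_add, mul_sub, add_mul, sub_mul, mul_smul_comm, smul_mul_assoc,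
        mul_one, one_mul]
      rw [hTR, one_mul, mul_assoc T R' T', hR'T', mul_one]
    have rhs : T * ((z - z') • (R * (A₁ * A₁ + 1) * R')) * T'
        = (z - z') • (A₁ * A₁ + 1) := by
      rw [mul_smul_comm, smul_mul_assoc]
      congr 1
      have : T * (R * (A₁ * A₁ + 1) * R') * T' = T * R * ((A₁ * A₁ + 1) * (R' * T')) := by
        simp only [mul_assoc]
      rw [this, hTR, hR'T', one_mul, mul_one]
    rw [lhs, rhs, hTdef, hT'def]
    exact oper_identity A₁ z z'
  -- adjoint facts
  have hadjR : ContinuousLinearMap.adjoint R = R' := by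
    rw [← ContinuousLinearMap.star_eq_adjoint, hRR']
  have hadjR' : ContinuousLinearMap.adjoint R' = R := by
    rw [← ContinuousLinearMap.star_eq_adjoint, hR'R]
  have hadjB : ContinuousLinearMap.adjoint (A₁ - I • (1 : H →L[ℂ] H))
      = A₁ + I • (1 : H →L[ℂ] H) := by
    rw [← ContinuousLinearMap.star_eq_adjoint]
    simp [star_sub, star_smul, hA₁.star_eq, Complex.conj_I, sub_neg_eq_add]
  -- the main entrywise identity
  have main : ImM = Matrix.of (fun j j' =>
      (z.im : ℂ) * @inner ℂ H _ (uz z' j) (uz z' j')) := by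
    ext j j'
    have hImMe : ImM j j' = (2 * I)⁻¹ * (M j j' - conj (M j' j)) := rfl
    have hMe : ∀ a b, M a b = z * (if a = b then 1 else 0)
        + (1 + z ^ 2) * @inner ℂ H _ (u a) (R (u b)) := fun _ _ => rfl
    have huze : ∀ a, uz z' a = (A₁ - I • (1 : H →L[ℂ] H)) (R' (u a)) := fun _ => rfl
    rw [Matrix.of_apply, hImMe, hMe j j', hMe j' j, huze j, huze j']
    -- simplify the conjugate
    have hconj : conj (z * (if j' = j then 1 else 0)
        + (1 + z ^ 2) * @inner ℂ H _ (u j') (R (u j)))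
        = z' * (if j = j' then 1 else 0) + (1 + z' ^ 2) * @inner ℂ H _ (u j) (R' (u j')) := by
      rw [map_add, _root_.map_mul, _root_.map_mul]
      have h1 : conj (if j' = j then (1:ℂ) else 0) = (if j = j' then (1:ℂ) else 0) := by
        simp [apply_ite (starRingEnd ℂ), eq_comm]
      have h2 : conj (1 + z ^ 2) = 1 + z' ^ 2 := by
        simp [hz'def, map_pow]
      have h3 : conj (@inner ℂ H _ (u j') (R (u j))) = @inner ℂ H _ (u j) (R' (u j')) := by
        rw [inner_conj_symm, ← hadjR]
        exact (ContinuousLinearMap.adjoint_inner_right R (u j) (u j')).symm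
      rw [h1, h2, h3]
    rw [hconj]
    -- rewrite LHS as an inner product with the key operator
    have hortho : @inner ℂ H _ (u j) (u j') = (if j = j' then (1:ℂ) else 0) :=
      orthonormal_iff_ite.mp hu j j'
    have lhs_eq : z * (if j = j' then 1 else 0) + (1 + z ^ 2) * @inner ℂ H _ (u j) (R (u j'))
        - (z' * (if j = j' then 1 else 0) + (1 + z' ^ 2) * @inner ℂ H _ (u j) (R' (u j')))
        = @inner ℂ H _ (u j)
            (((z - z') • (1 : H →L[ℂ] H) + (1 + z ^ 2) • R - (1 + z' ^ 2) • R') (u j')) := by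
      simp only [ContinuousLinearMap.sub_apply, ContinuousLinearMap.add_apply,
        ContinuousLinearMap.smul_apply, ContinuousLinearMap.one_apply,
        inner_sub_right, inner_add_right, inner_smul_right, hortho]
      ring
    rw [lhs_eq, key]
    -- rewrite RHS inner product
    have rhs_eq : @inner ℂ H _ ((A₁ - I • (1 : H →L[ℂ] H)) (R' (u j)))
          ((A₁ - I • (1 : H →L[ℂ] H)) (R' (u j')))
        = @inner ℂ H _ (u j) (((z - z') • (R * (A₁ * A₁ + 1) * R')) (u j') : H) / (z - z') := by
      rw [← ContinuousLinearMap.adjoint_inner_right, hadjB,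
          ← ContinuousLinearMap.adjoint_inner_right (A := R'), hadjR']
      have : R ((A₁ + I • (1 : H →L[ℂ] H)) ((A₁ - I • (1 : H →L[ℂ] H)) (R' (u j'))))
          = (R * (A₁ * A₁ + 1) * R') (u j') := by
        have hcomp : R * ((A₁ + I • (1 : H →L[ℂ] H)) * (A₁ - I • (1 : H →L[ℂ] H))) * R'
            = R * (A₁ * A₁ + 1) * R' := by rw [BstarB_identity]
        calc R ((A₁ + I • (1 : H →L[ℂ] H)) ((A₁ - I • (1 : H →L[ℂ] H)) (R' (u j'))))
            = (R * ((A₁ + I • (1 : H →L[ℂ] H)) * (A₁ - I • (1 : H →L[ℂ] H))) * R') (u j') := rfl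
          _ = (R * (A₁ * A₁ + 1) * R') (u j') := by rw [hcomp]
      rw [this]
      have hzz' : z - z' ≠ 0 := by
        rw [hz'def, Complex.sub_conj]
        simp [hzim]
      rw [ContinuousLinearMap.smul_apply, inner_smul_right]
      field_simp
    rw [rhs_eq]
    have hsc : (z - z') = 2 * I * (z.im : ℂ) := by
      rw [hz'def, Complex.sub_conj]; push_cast; ring
    rw [ContinuousLinearMap.smul_apply, inner_smul_right, hsc]
    have hI : (2 * I : ℂ) ≠ 0 := by simp [Complex.I_ne_zero]
    field_simp
  refine ⟨?_, main, ?_⟩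
  · rw [main]
    exact gram_psd z.im hz.le _
  · intro hli
    rw [main]
    exact gram_pd z.im hz _ hli
end

section
/- For n point interactions at distinct points ξ_1,…,ξ_n ∈ ℝ³ with coupling matrix θ = θ*, the scattering amplitude A_{θ,Ξ}(ω', ω, k) = (4π)^{-1} ∑_{j,j'} P_{θ,Ξ}(k²)_{j,j'} e^{ik(ω·ξ_{j'} − ω'·ξ_j)} satisfies the reciprocity relation A_{θ,Ξ}(ω', ω, k) = A_{θ,Ξ}(−ω, −ω', k) for all ω, ω' ∈ S² if and only if the matrix P_{θ,Ξ}(k²) is symmetric, P_{θ,Ξ}(k²)^t = P_{θ,Ξ}(k²). -/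
open Complex Real

noncomputable section ReciprocityAux

open Filter Topology

/-- Key asymptotic lemma: exponentials `exp(β j sinh t + I α j cosh t)` with distinct `β`
are linearly independent as functions of `t`. -/
lemma recip_asympt {ι : Type*} [DecidableEq ι] (S : Finset ι) (c : ι → ℂ) (α β : ι → ℝ)
    (hβ : Set.InjOn β S)
    (h : ∀ t : ℝ, ∑ j ∈ S, c j *
      Complex.exp (((β j * Real.sinh t : ℝ) : ℂ) + I * ((α j * Real.cosh t : ℝ) : ℂ)) = 0) :
    ∀ j ∈ S, c j = 0 := by
  induction S using Finset.strongInduction with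
  | _ S ih =>
    rcases S.eq_empty_or_nonempty with rfl | hS
    · simp
    obtain ⟨m, hm, hmax⟩ := S.exists_max_image β hS
    have hmlt : ∀ j ∈ S, j ≠ m → β j < β m := by
      intro j hj hjm
      rcases lt_or_eq_of_le (hmax j hj) with h' | h'
      · exact h'
      · exact absurd (hβ hj hm h') hjm
    set g : ℝ → ℂ := fun t => ∑ j ∈ S, c j *
      Complex.exp ((((β j - β m) * Real.sinh t : ℝ) : ℂ) +
        I * (((α j - α m) * Real.cosh t : ℝ) : ℂ)) with hg
    have hg0 : ∀ t, g t = 0 := by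
      intro t
      have : g t = (∑ j ∈ S, c j *
          Complex.exp (((β j * Real.sinh t : ℝ) : ℂ) + I * ((α j * Real.cosh t : ℝ) : ℂ))) *
          Complex.exp (-((((β m * Real.sinh t : ℝ)) : ℂ) + I * ((α m * Real.cosh t : ℝ) : ℂ))) := by
        rw [Finset.sum_mul]
        refine Finset.sum_congr rfl fun j hj => ?_
        rw [mul_assoc, ← Complex.exp_add]
        congr 1
        push_cast
        ring_nf
      rw [this, h t, zero_mul]
    have hgt : Tendsto g atTop (𝓝 (c m)) := by
      have hsplit : ∀ t, g t = c m + ∑ j ∈ S.erase m, c j *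
          Complex.exp ((((β j - β m) * Real.sinh t : ℝ) : ℂ) +
            I * (((α j - α m) * Real.cosh t : ℝ) : ℂ)) := by
        intro t
        simp only [hg]
        rw [← Finset.add_sum_erase _ _ hm]
        simp
      have hrest : Tendsto (fun t => ∑ j ∈ S.erase m, c j *
          Complex.exp ((((β j - β m) * Real.sinh t : ℝ) : ℂ) +
            I * (((α j - α m) * Real.cosh t : ℝ) : ℂ))) atTop (𝓝 0) := by
        have : Tendsto (fun t => ∑ j ∈ S.erase m, c j *
            Complex.exp ((((β j - β m) * Real.sinh t : ℝ) : ℂ) +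
              I * (((α j - α m) * Real.cosh t : ℝ) : ℂ))) atTop (𝓝 (∑ j ∈ S.erase m, 0)) := by
          refine tendsto_finset_sum _ fun j hj => ?_
          have hjS : j ∈ S := Finset.mem_of_mem_erase hj
          have hjm : j ≠ m := Finset.ne_of_mem_erase hj
          have hneg : β j - β m < 0 := sub_neg.mpr (hmlt j hjS hjm)
          have hsinh : Tendsto Real.sinh atTop atTop := by
            refine tendsto_atTop_mono' atTop ?_ tendsto_id
            filter_upwards [eventually_ge_atTop (0:ℝ)] with t ht
            exact Real.self_le_sinh_iff.mpr ht
          have hbot : Tendsto (fun t => (β j - β m) * Real.sinh t) atTop atBot :=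
            (tendsto_const_mul_atBot_of_neg hneg).mpr hsinh
          have hexp : Tendsto (fun t => Real.exp ((β j - β m) * Real.sinh t)) atTop (𝓝 0) :=
            Real.tendsto_exp_atBot.comp hbot
          refine squeeze_zero_norm (fun t => ?_) (by simpa using hexp.const_mul ‖c j‖)
          rw [norm_mul, Complex.norm_exp]
          have hre : ((((β j - β m) * Real.sinh t : ℝ) : ℂ) +
              I * (((α j - α m) * Real.cosh t : ℝ) : ℂ)).re = (β j - β m) * Real.sinh t := by
            simp only [Complex.add_re, Complex.ofReal_re, Complex.mul_re, Complex.I_re,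
              Complex.I_im, Complex.ofReal_im, zero_mul, one_mul, mul_zero, sub_zero, zero_sub]
            ring
          rw [hre]
        simpa using this
      have hfun : g = fun t => c m + ∑ j ∈ S.erase m, c j *
          Complex.exp ((((β j - β m) * Real.sinh t : ℝ) : ℂ) +
            I * (((α j - α m) * Real.cosh t : ℝ) : ℂ)) := funext hsplit
      rw [hfun]
      simpa using tendsto_const_nhds.add hrest
    have hcm : c m = 0 := by
      have : Tendsto g atTop (𝓝 0) := by
        have hz : g = fun _ => 0 := funext hg0
        rw [hz]
        exact tendsto_const_nhds
      exact (tendsto_nhds_unique hgt this)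
    intro j hj
    rcases eq_or_ne j m with rfl | hjm
    · exact hcm
    · refine ih (S.erase m) (Finset.erase_ssubset hm) (hβ.mono (by simp [Finset.erase_subset]))
        ?_ j (Finset.mem_erase.mpr ⟨hjm, hj⟩)
      intro t
      have := h t
      rw [← Finset.add_sum_erase _ _ hm, hcm, zero_mul, zero_add] at this
      exact this

end ReciprocityAux

section Part2
open Topology Filter

/-- Linear independence of `θ ↦ exp(i(a j cos θ + b j sin θ))` for distinct `b`. -/
lemma recip_circle {ι : Type*} [DecidableEq ι] [Fintype ι] (c : ι → ℂ) (a b : ι → ℝ)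
    (hb : Function.Injective b)
    (h : ∀ θ : ℝ, ∑ j, c j *
      Complex.exp (I * ((a j * Real.cos θ + b j * Real.sin θ : ℝ) : ℂ)) = 0) :
    ∀ j, c j = 0 := by
  set F : ℂ → ℂ := fun z => ∑ j, c j *
    Complex.exp (I * ((a j : ℂ) * Complex.cos z + (b j : ℂ) * Complex.sin z)) with hF
  have hdiff : Differentiable ℂ F := by
    apply Differentiable.fun_sum
    intro j _
    exact (differentiable_const _).mul (Complex.differentiable_exp.comp
      ((differentiable_const I).mul (((differentiable_const _).mul
        Complex.differentiable_cos).add ((differentiable_const _).mul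
          Complex.differentiable_sin))))
  have hreal : ∀ θ : ℝ, F ((θ : ℝ) : ℂ) = 0 := by
    intro θ
    rw [hF, ← h θ]
    refine Finset.sum_congr rfl fun j _ => ?_
    congr 2
    rw [← Complex.ofReal_cos, ← Complex.ofReal_sin]
    push_cast
    ring
  have hF0 : ∀ z, F z = 0 := by
    have han : AnalyticOnNhd ℂ F Set.univ :=
      hdiff.differentiableOn.analyticOnNhd isOpen_univ
    have hu : Tendsto (fun m : ℕ => (((((m:ℝ)+1)⁻¹ : ℝ)) : ℂ)) atTop (𝓝[≠] (0:ℂ)) := by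
      apply tendsto_nhdsWithin_of_tendsto_nhds_of_eventually_within
      · have h1 : Tendsto (fun m : ℕ => (((m:ℝ)+1)⁻¹ : ℝ)) atTop (𝓝 0) :=
          tendsto_one_div_add_atTop_nhds_zero_nat.congr (by simp [one_div])
        have := (Complex.continuous_ofReal.tendsto 0).comp h1
        simpa [Function.comp_def] using this
      · filter_upwards with m
        simp only [Set.mem_compl_iff, Set.mem_singleton_iff]
        intro hcon
        have h2 : (((m:ℝ)+1)⁻¹ : ℝ) = 0 := by exact_mod_cast hcon
        have h3 : (0:ℝ) < (m:ℝ)+1 := by positivity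
        rw [inv_eq_zero] at h2
        linarith
    have hfreq : ∃ᶠ z in 𝓝[≠] (0:ℂ), F z = 0 :=
      hu.frequently (Filter.Frequently.of_forall fun m => hreal _)
    intro z
    exact han.eqOn_zero_of_preconnected_of_frequently_eq_zero isPreconnected_univ
      (Set.mem_univ 0) hfreq (Set.mem_univ z)
  have hasympt : ∀ t : ℝ, ∑ j, c j *
      Complex.exp ((((-b j) * Real.sinh t : ℝ) : ℂ) + I * ((a j * Real.cosh t : ℝ) : ℂ)) = 0 := by
    intro t
    rw [← hF0 ((t : ℂ) * I)]
    refine (Finset.sum_congr rfl fun j _ => ?_).symm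
    have harg : I * ((a j : ℂ) * Complex.cos ((t:ℂ)*I) + (b j : ℂ) * Complex.sin ((t:ℂ)*I))
        = (((-b j) * Real.sinh t : ℝ) : ℂ) + I * ((a j * Real.cosh t : ℝ) : ℂ) := by
      rw [Complex.cos_mul_I, Complex.sin_mul_I]
      push_cast [Complex.ofReal_sinh, Complex.ofReal_cosh]
      linear_combination ((b j : ℂ) * Complex.sinh (t:ℂ)) * Complex.I_sq
    rw [harg]
  intro j
  refine recip_asympt Finset.univ c a (fun j => -b j)
    (fun x _ y _ hxy => hb (neg_injective hxy)) hasympt j (Finset.mem_univ j)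

end Part2

section Part3
open Topology Filter

local notation "E3" => EuclideanSpace ℝ (Fin 3)

lemma recip_exists_w {n : ℕ} (ξ : Fin n → E3) (hξ : Function.Injective ξ) :
    ∃ w : E3, w ≠ 0 ∧ Function.Injective fun j => (inner ℝ w (ξ j) : ℝ) := by
  classical
  set p : Option (Fin n × Fin n) → Subspace ℝ E3 := fun q =>
    match q with
    | none => ⊥
    | some q => if q.1 = q.2 then ⊥ else (ℝ ∙ (ξ q.1 - ξ q.2))ᗮ with hp
  have hne : ⋃ q, (p q : Set E3) ≠ Set.univ := by
    intro hcov
    obtain ⟨q, hq⟩ := Subspace.exists_eq_top_of_iUnion_eq_univ hcov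
    match q with
    | none => exact absurd hq bot_ne_top
    | some q =>
      by_cases hd : q.1 = q.2
      · rw [hp] at hq
        simp only [hd, if_true] at hq
        exact absurd hq bot_ne_top
      · rw [hp] at hq
        simp only [hd, if_false] at hq
        rw [Submodule.orthogonal_eq_top_iff, Submodule.span_singleton_eq_bot] at hq
        exact hd (hξ (sub_eq_zero.mp hq))
  obtain ⟨w, hw⟩ := Set.ne_univ_iff_exists_notMem _ |>.mp hne
  simp only [Set.mem_iUnion, not_exists, SetLike.mem_coe] at hw
  refine ⟨w, ?_, ?_⟩
  · intro h0
    exact hw none (by simp [hp, h0])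
  · intro j j' hjj'
    by_contra hne'
    apply hw (some (j, j'))
    rw [hp]
    simp only [hne', if_false]
    rw [Submodule.mem_orthogonal_singleton_iff_inner_left, inner_sub_right, sub_eq_zero]
    exact (hjj'.symm : (inner ℝ w (ξ j') : ℝ) = inner ℝ w (ξ j)).symm

lemma recip_sphere {n : ℕ} (k : ℝ) (hk : k ≠ 0) (ξ : Fin n → E3)
    (hξ : Function.Injective ξ) (c : Fin n → ℂ)
    (h : ∀ ω : E3, ‖ω‖ = 1 →
      ∑ j, c j * Complex.exp (I * (k : ℂ) * ((inner ℝ ω (ξ j) : ℝ) : ℂ)) = 0) :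
    ∀ j, c j = 0 := by
  classical
  obtain ⟨w, hw1, hwinj⟩ : ∃ w : E3, ‖w‖ = 1 ∧
      Function.Injective fun j => (inner ℝ w (ξ j) : ℝ) := by
    obtain ⟨w₀, hw₀ne, hw₀⟩ := recip_exists_w ξ hξ
    have hnw₀ : (0:ℝ) < ‖w₀‖ := norm_pos_iff.mpr hw₀ne
    refine ⟨‖w₀‖⁻¹ • w₀, ?_, ?_⟩
    · rw [norm_smul, norm_inv, norm_norm, inv_mul_cancel₀ hnw₀.ne']
    · intro j j' hjj'
      apply hw₀
      simp only [real_inner_smul_left] at hjj'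
      exact mul_left_cancel₀ (inv_ne_zero hnw₀.ne') hjj'
  obtain ⟨v, hv1, hvw⟩ : ∃ v : E3, ‖v‖ = 1 ∧ (inner ℝ v w : ℝ) = 0 := by
    have hvex : ∃ v : E3, v ∈ (ℝ ∙ w)ᗮ ∧ v ≠ 0 := by
      by_contra h'
      push_neg at h'
      have hbot : (ℝ ∙ w)ᗮ = ⊥ := by
        rw [Submodule.eq_bot_iff]
        intro v hv
        by_contra hv0
        exact hv0 (h' v hv)
      rw [Submodule.orthogonal_eq_bot_iff] at hbot
      have h1 : Module.finrank ℝ (ℝ ∙ w) = 1 :=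
        finrank_span_singleton (by rw [← norm_ne_zero_iff, hw1]; norm_num)
      have h3 : Module.finrank ℝ E3 = 3 := by
        simp [finrank_euclideanSpace]
      rw [hbot, finrank_top] at h1
      rw [h3] at h1
      norm_num at h1
    obtain ⟨v₀, hv₀mem, hv₀ne⟩ := hvex
    have hnv₀ : (0:ℝ) < ‖v₀‖ := norm_pos_iff.mpr hv₀ne
    refine ⟨‖v₀‖⁻¹ • v₀, ?_, ?_⟩
    · rw [norm_smul, norm_inv, norm_norm, inv_mul_cancel₀ hnv₀.ne']
    · have h0 : (inner ℝ v₀ w : ℝ) = 0 := by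
        have := Submodule.mem_orthogonal_singleton_iff_inner_right.mp hv₀mem
        rw [real_inner_comm] at this
        exact this
      rw [real_inner_smul_left, h0, mul_zero]
  -- apply circle lemma
  have key := recip_circle c (fun j => k * (inner ℝ v (ξ j) : ℝ)) (fun j => k * (inner ℝ w (ξ j) : ℝ))
    (fun j j' hjj' => hwinj (mul_left_cancel₀ hk hjj'))
  apply key
  intro θ
  have hωn : ‖Real.cos θ • v + Real.sin θ • w‖ = 1 := by
    have hsq : ‖Real.cos θ • v + Real.sin θ • w‖ ^ 2 = 1 := by
      rw [norm_add_sq_real, norm_smul, norm_smul, real_inner_smul_left,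
        real_inner_smul_right, hvw, hv1, hw1]
      simp only [Real.norm_eq_abs, mul_one, mul_zero]
      rw [_root_.sq_abs, _root_.sq_abs]
      nlinarith [Real.sin_sq_add_cos_sq θ]
    have h2 : ‖Real.cos θ • v + Real.sin θ • w‖ = Real.sqrt 1 := by
      rw [← hsq, Real.sqrt_sq (norm_nonneg _)]
    simpa using h2
  have hinner : ∀ j, (inner ℝ (Real.cos θ • v + Real.sin θ • w) (ξ j) : ℝ) =
      Real.cos θ * (inner ℝ v (ξ j) : ℝ) + Real.sin θ * (inner ℝ w (ξ j) : ℝ) := by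
    intro j
    rw [inner_add_left, real_inner_smul_left, real_inner_smul_left]
  rw [← h _ hωn]
  refine Finset.sum_congr rfl fun j _ => ?_
  congr 1
  rw [hinner j]
  push_cast
  ring_nf

end Part3

/-- Reciprocity of the point-interaction scattering amplitude
`A(ω',ω) = (4π)⁻¹ ∑_{j,j'} P_{j,j'} e^{ik(ω·ξ_{j'} - ω'·ξ_j)}`:
`A(ω',ω) = A(-ω,-ω')` for all unit vectors `ω, ω'` iff `P` is symmetric. -/
theorem reciprocity_iff_symmetric {n : ℕ} (k : ℝ) (hk : k ≠ 0)
    (ξ : Fin n → EuclideanSpace ℝ (Fin 3)) (hξ : Function.Injective ξ)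
    (P : Matrix (Fin n) (Fin n) ℂ) (hP : IsUnit P.det)
    (A : EuclideanSpace ℝ (Fin 3) → EuclideanSpace ℝ (Fin 3) → ℂ)
    (hA : ∀ ω' ω, A ω' ω = (4 * (π : ℂ))⁻¹ *
      ∑ j : Fin n, ∑ j' : Fin n, P j j' *
        Complex.exp (I * k * ((@inner ℝ _ _ ω (ξ j') : ℝ) - (@inner ℝ _ _ ω' (ξ j) : ℝ)))) :
    (∀ ω ω' : EuclideanSpace ℝ (Fin 3), ‖ω‖ = 1 → ‖ω'‖ = 1 → A ω' ω = A (-ω) (-ω'))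
      ↔ P.transpose = P := by
  have h4π : (4 * (π : ℂ)) ≠ 0 :=
    mul_ne_zero (by norm_num) (Complex.ofReal_ne_zero.mpr Real.pi_ne_zero)
  -- the `B` transform: rewriting the amplitude at `(-ω, -ω')`
  have hBtrans : ∀ ω ω' : EuclideanSpace ℝ (Fin 3),
      (∑ j : Fin n, ∑ j' : Fin n, P j j' *
        Complex.exp (I * k * ((@inner ℝ _ _ (-ω') (ξ j') : ℝ) - (@inner ℝ _ _ (-ω) (ξ j) : ℝ))))
      = ∑ j : Fin n, ∑ j' : Fin n, P j' j *
        Complex.exp (I * k * ((@inner ℝ _ _ ω (ξ j') : ℝ) - (@inner ℝ _ _ ω' (ξ j) : ℝ))) := by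
    intro ω ω'
    rw [Finset.sum_comm]
    refine Finset.sum_congr rfl fun j _ => Finset.sum_congr rfl fun j' _ => ?_
    congr 2
    rw [inner_neg_left, inner_neg_left]
    push_cast
    ring
  constructor
  · -- reciprocity ⇒ symmetric
    intro H
    have key : ∀ ω' : EuclideanSpace ℝ (Fin 3), ‖ω'‖ = 1 → ∀ j',
        ∑ j, (P j j' - P j' j) *
          Complex.exp (I * ((-k : ℝ) : ℂ) * ((@inner ℝ _ _ ω' (ξ j) : ℝ) : ℂ)) = 0 := by
      intro ω' hω'
      have h0 : ∀ ω : EuclideanSpace ℝ (Fin 3), ‖ω‖ = 1 →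
          ∑ j', (∑ j, (P j j' - P j' j) *
              Complex.exp (I * ((-k : ℝ) : ℂ) * ((@inner ℝ _ _ ω' (ξ j) : ℝ) : ℂ))) *
            Complex.exp (I * (k : ℂ) * ((@inner ℝ _ _ ω (ξ j') : ℝ) : ℂ)) = 0 := by
        intro ω hω
        have h1 := H ω ω' hω hω'
        rw [hA, hA] at h1
        have h2 := mul_left_cancel₀ (inv_ne_zero h4π) h1
        rw [hBtrans ω ω'] at h2
        have h3 : ∑ j : Fin n, ∑ j' : Fin n, (P j j' - P j' j) *
            Complex.exp (I * k *
              ((@inner ℝ _ _ ω (ξ j') : ℝ) - (@inner ℝ _ _ ω' (ξ j) : ℝ))) = 0 := by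
          simp only [sub_mul, Finset.sum_sub_distrib]
          rw [h2, sub_self]
        rw [Finset.sum_comm] at h3
        rw [← h3]
        refine Finset.sum_congr rfl fun j' _ => ?_
        rw [Finset.sum_mul]
        refine Finset.sum_congr rfl fun j _ => ?_
        rw [mul_assoc, ← Complex.exp_add]
        congr 2
        push_cast
        ring
      exact fun j' => recip_sphere k hk ξ hξ _ h0 j'
    have key2 : ∀ j' j, P j j' - P j' j = 0 := fun j' =>
      recip_sphere (-k) (neg_ne_zero.mpr hk) ξ hξ _ (fun ω' hω' => key ω' hω' j')
    ext i j
    rw [Matrix.transpose_apply]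
    exact sub_eq_zero.mp (key2 i j)
  · -- symmetric ⇒ reciprocity
    intro hsym ω ω' hω hω'
    have hPsym : ∀ i j, P j i = P i j := fun i j => by
      conv_lhs => rw [← hsym]
      rfl
    rw [hA, hA]
    congr 1
    rw [hBtrans ω ω']
    exact Finset.sum_congr rfl fun j _ => Finset.sum_congr rfl fun j' _ => by
      rw [hPsym j j']
end

section
/- Fix k ≠ 0 and distinct points ξ_1,…,ξ_n ∈ ℝ³. Then the functions ω ↦ e^{i k ω·ξ_j} (1 ≤ j ≤ n), viewed as complex-valued functions on the unit sphere S², are linearly independent. -/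
open Complex

/-- A nonzero vector with nonzero inner product against every element of a
finite set of nonzero vectors. -/
lemma aux_exists_generic (s : Finset (EuclideanSpace ℝ (Fin 3)))
    (hs : ∀ d ∈ s, d ≠ 0) :
    ∃ w : EuclideanSpace ℝ (Fin 3), w ≠ 0 ∧
      ∀ d ∈ s, (inner ℝ w d : ℝ) ≠ 0 := by
  classical
  induction s using Finset.induction_on with
  | empty =>
      refine ⟨EuclideanSpace.single 0 1, ?_, by simp⟩
      intro h
      have := congrArg (fun x => x 0) h
      simp [EuclideanSpace.single] at this
  | @insert d s hd ih =>
      have hd0 : d ≠ 0 := hs d (Finset.mem_insert_self d s)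
      obtain ⟨w, hw0, hw⟩ := ih (fun p hp => hs p (Finset.mem_insert_of_mem hp))
      -- perturb w by ε • d for small positive ε
      have h1 : ∀ p ∈ s, ∀ᶠ ε : ℝ in nhdsWithin 0 (Set.Ioi 0),
          (inner ℝ (w + ε • d) p : ℝ) ≠ 0 := by
        intro p hp
        have hcont : Filter.Tendsto (fun ε : ℝ => (inner ℝ (w + ε • d) p : ℝ))
            (nhdsWithin 0 (Set.Ioi 0)) (nhds (inner ℝ w p : ℝ)) := by
          have : Continuous (fun ε : ℝ => (inner ℝ w p : ℝ) + ε * (inner ℝ d p : ℝ)) := by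
            continuity
          have h' := (this.tendsto 0).mono_left
            (@nhdsWithin_le_nhds ℝ _ 0 (Set.Ioi 0))
          simp only [zero_mul, add_zero] at h'
          refine h'.congr (fun ε => ?_)
          rw [inner_add_left, real_inner_smul_left]
        exact hcont.eventually_ne (hw p hp)
      have h2 : ∀ᶠ ε : ℝ in nhdsWithin 0 (Set.Ioi 0),
          (inner ℝ (w + ε • d) d : ℝ) ≠ 0 := by
        by_cases hwd : (inner ℝ w d : ℝ) = 0
        · filter_upwards [self_mem_nhdsWithin] with ε hε
          rw [inner_add_left, real_inner_smul_left, hwd, zero_add]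
          have hdd : (0:ℝ) < inner ℝ d d := by
            rw [real_inner_self_eq_norm_sq]
            exact pow_pos (norm_pos_iff.2 hd0) 2
          exact ne_of_gt (mul_pos hε hdd)
        · have hcont : Filter.Tendsto (fun ε : ℝ => (inner ℝ (w + ε • d) d : ℝ))
              (nhdsWithin 0 (Set.Ioi 0)) (nhds (inner ℝ w d : ℝ)) := by
            have : Continuous (fun ε : ℝ => (inner ℝ w d : ℝ) + ε * (inner ℝ d d : ℝ)) := by
              continuity
            have h' := (this.tendsto 0).mono_left
              (@nhdsWithin_le_nhds ℝ _ 0 (Set.Ioi 0))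
            simp only [zero_mul, add_zero] at h'
            refine h'.congr (fun ε => ?_)
            rw [inner_add_left, real_inner_smul_left]
          exact hcont.eventually_ne hwd
      have hall : ∀ᶠ ε : ℝ in nhdsWithin 0 (Set.Ioi 0),
          (∀ p ∈ s, (inner ℝ (w + ε • d) p : ℝ) ≠ 0) ∧
            (inner ℝ (w + ε • d) d : ℝ) ≠ 0 :=
        ((Filter.eventually_all_finset s).2 h1).and h2
      obtain ⟨ε, hε1, hε2⟩ := hall.exists
      refine ⟨w + ε • d, ?_, ?_⟩
      · intro h
        rw [h] at hε2
        simp at hε2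
      · intro p hp
        rcases Finset.mem_insert.1 hp with rfl | hp'
        · exact hε2
        · exact hε1 p hp'

/-- For `k ≠ 0` and distinct points `ξ_1, …, ξ_n ∈ ℝ³`, the functions
`ω ↦ e^{ikω·ξ_j}` on the unit sphere `S²` are linearly independent over `ℂ`. -/
theorem linearIndependent_sphere_exponentials {n : ℕ} (k : ℝ) (hk : k ≠ 0)
    (ξ : Fin n → EuclideanSpace ℝ (Fin 3)) (hξ : Function.Injective ξ) :
    LinearIndependent ℂ (fun j : Fin n =>
      (fun ω : Metric.sphere (0 : EuclideanSpace ℝ (Fin 3)) 1 =>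
        Complex.exp (I * k * (@inner ℝ _ _ (ω : EuclideanSpace ℝ (Fin 3)) (ξ j) : ℝ))
        : Metric.sphere (0 : EuclideanSpace ℝ (Fin 3)) 1 → ℂ)) := by
  classical
  -- generic direction w
  obtain ⟨w₀, hw₀0, hw₀⟩ := aux_exists_generic
      ((Finset.univ.filter (fun p : Fin n × Fin n => p.1 ≠ p.2)).image
        (fun p => ξ p.1 - ξ p.2))
      (by
        intro d hd
        simp only [Finset.mem_image, Finset.mem_filter, Finset.mem_univ, true_and] at hd
        obtain ⟨p, hp, rfl⟩ := hd
        exact sub_ne_zero.2 fun h => hp (hξ h))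
  set w : EuclideanSpace ℝ (Fin 3) := ‖w₀‖⁻¹ • w₀ with hw_def
  have hw_norm : ‖w‖ = 1 := norm_smul_inv_norm hw₀0
  have hw_sep : ∀ i j : Fin n, i ≠ j →
      (inner ℝ w (ξ i) : ℝ) ≠ (inner ℝ w (ξ j) : ℝ) := by
    intro i j hij h
    have h0 : (inner ℝ w (ξ i - ξ j) : ℝ) = 0 := by
      rw [inner_sub_right]; rw [h]; ring
    have h1 : (inner ℝ w₀ (ξ i - ξ j) : ℝ) ≠ 0 := by
      apply hw₀
      simp only [Finset.mem_image, Finset.mem_filter, Finset.mem_univ, true_and]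
      exact ⟨(i, j), hij, rfl⟩
    rw [hw_def, real_inner_smul_left] at h0
    rcases mul_eq_zero.1 h0 with h' | h'
    · exact (inv_ne_zero (norm_ne_zero_iff.2 hw₀0)) h'
    · exact h1 h'
  -- orthogonal unit vector v
  have hvex : ∃ v : EuclideanSpace ℝ (Fin 3), ‖v‖ = 1 ∧ (inner ℝ v w : ℝ) = 0 := by
    have hne : ((ℝ ∙ w)ᗮ : Submodule ℝ (EuclideanSpace ℝ (Fin 3))) ≠ ⊥ := by
      intro h
      have htop : (ℝ ∙ w) = ⊤ := Submodule.orthogonal_eq_bot_iff.1 h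
      have h1 : Module.finrank ℝ (ℝ ∙ w) = 1 :=
        finrank_span_singleton (by
          intro h'
          rw [h'] at hw_norm
          simp at hw_norm)
      rw [htop] at h1
      rw [finrank_top] at h1
      simp [finrank_euclideanSpace] at h1
    obtain ⟨u, hu_mem, hu0⟩ := Submodule.exists_mem_ne_zero_of_ne_bot hne
    refine ⟨‖u‖⁻¹ • u, norm_smul_inv_norm hu0, ?_⟩
    rw [real_inner_smul_left]
    have : (inner ℝ u w : ℝ) = 0 := by
      have := hu_mem
      rw [Submodule.mem_orthogonal] at this
      have h' := this w (Submodule.mem_span_singleton_self w)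
      rw [real_inner_comm] at h'
      exact h'
    rw [this, mul_zero]
  obtain ⟨v, hv_norm, hvw⟩ := hvex
  -- setup
  rw [Fintype.linearIndependent_iff]
  intro c hc
  by_contra hcn
  push_neg at hcn
  obtain ⟨j₀, hj₀⟩ := hcn
  set a : Fin n → ℝ := fun i => (inner ℝ v (ξ i) : ℝ) with ha_def
  set b : Fin n → ℝ := fun i => (inner ℝ w (ξ i) : ℝ) with hb_def
  set S : Finset (Fin n) := Finset.univ.filter (fun i => c i ≠ 0) with hS_def
  have hSne : S.Nonempty := ⟨j₀, by simp [hS_def, hj₀]⟩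
  obtain ⟨m, hmS, hm⟩ := S.exists_max_image (fun i => -(k * b i)) hSne
  have hcm : c m ≠ 0 := by
    have := hmS; simp only [hS_def, Finset.mem_filter] at this; exact this.2
  -- points on the sphere
  have hsphere : ∀ x : ℝ,
      (Real.cos x • v + Real.sin x • w) ∈ Metric.sphere (0 : EuclideanSpace ℝ (Fin 3)) 1 := by
    intro x
    rw [mem_sphere_zero_iff_norm]
    have horth : (inner ℝ (Real.cos x • v) (Real.sin x • w) : ℝ) = 0 := by
      rw [real_inner_smul_left, real_inner_smul_right, hvw]; ring
    have hsq : ‖Real.cos x • v + Real.sin x • w‖ ^ 2 = 1 := by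
      rw [norm_add_sq_real, horth]
      rw [norm_smul, norm_smul, hv_norm, hw_norm]
      simp only [Real.norm_eq_abs, mul_one]
      nlinarith [Real.sin_sq_add_cos_sq x, _root_.sq_abs (Real.cos x), _root_.sq_abs (Real.sin x)]
    nlinarith [norm_nonneg (Real.cos x • v + Real.sin x • w)]
  -- pointwise vanishing on the great circle
  have hpoint : ∀ x : ℝ,
      ∑ i, c i * Complex.exp (I * k * ((Real.cos x * a i + Real.sin x * b i : ℝ) : ℂ)) = 0 := by
    intro x
    have h0 := congrFun hc ⟨_, hsphere x⟩
    simp only [Finset.sum_apply, Pi.smul_apply, smul_eq_mul, Pi.zero_apply] at h0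
    have hin : ∀ i : Fin n,
        (inner ℝ (Real.cos x • v + Real.sin x • w) (ξ i) : ℝ)
          = Real.cos x * a i + Real.sin x * b i := fun i => by
      rw [inner_add_left, real_inner_smul_left, real_inner_smul_left]
    rw [← h0]
    apply Finset.sum_congr rfl
    intro i _
    rw [hin i]
  -- the entire function
  set g : ℂ → ℂ := fun t =>
    ∑ i, c i * Complex.exp (I * k * ((a i : ℂ) * Complex.cos t + (b i : ℂ) * Complex.sin t))
    with hg_def
  have hg_real : ∀ x : ℝ, g x = 0 := by
    intro x
    rw [hg_def, ← hpoint x]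
    apply Finset.sum_congr rfl
    intro i _
    congr 2
    rw [← Complex.ofReal_cos, ← Complex.ofReal_sin]
    push_cast
    ring
  have hg_diff : Differentiable ℂ g := by
    rw [hg_def]
    apply Differentiable.fun_sum
    intro i _
    apply Differentiable.const_mul
    apply Complex.differentiable_exp.comp
    apply Differentiable.const_mul
    exact (Complex.differentiable_cos.const_mul _).add
      (Complex.differentiable_sin.const_mul _)
  have hg_zero : ∀ t : ℂ, g t = 0 := by
    have hana : AnalyticOnNhd ℂ g Set.univ :=
      hg_diff.differentiableOn.analyticOnNhd isOpen_univ
    have hfreq : ∃ᶠ z in nhdsWithin (0 : ℂ) {z | z ≠ 0}, g z = 0 := by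
      have htend : Filter.Tendsto (fun n : ℕ => (((1 / ((n : ℝ) + 1) : ℝ)) : ℂ))
          Filter.atTop (nhdsWithin (0 : ℂ) {z | z ≠ 0}) := by
        apply tendsto_nhdsWithin_of_tendsto_nhds_of_eventually_within
        · have : Filter.Tendsto (fun n : ℕ => 1 / ((n : ℝ) + 1)) Filter.atTop (nhds 0) :=
            tendsto_one_div_add_atTop_nhds_zero_nat
          have h' := (Complex.continuous_ofReal.tendsto 0).comp this
          simpa [Function.comp_def] using h'
        · filter_upwards with n
          simp only [Set.mem_setOf_eq, ne_eq, Complex.ofReal_eq_zero]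
          positivity
      exact htend.frequently (Filter.Frequently.of_forall fun n => hg_real _)
    have := hana.eqOn_zero_of_preconnected_of_frequently_eq_zero
      isPreconnected_univ (Set.mem_univ 0) hfreq
    intro t
    exact this (Set.mem_univ t)
  -- evaluate at s * I (multiplied by normalizing entire factor)
  have hkey : ∀ s : ℝ, ∑ i, c i *
      Complex.exp (((k * (b m - b i) * Real.sinh s : ℝ) : ℂ) +
        ((k * a i * Real.cosh s : ℝ) : ℂ) * I) = 0 := by
    intro s
    have h1 : g ((s : ℂ) * I) * Complex.exp (I * ((-(k * b m) : ℝ) : ℂ) *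
        Complex.sin ((s : ℂ) * I)) = 0 := by
      rw [hg_zero, zero_mul]
    rw [hg_def] at h1
    simp only [Finset.sum_mul] at h1
    rw [← h1]
    apply Finset.sum_congr rfl
    intro i _
    rw [mul_assoc (c i), ← Complex.exp_add]
    congr 2
    rw [Complex.cos_mul_I, Complex.sin_mul_I, ← Complex.ofReal_cosh, ← Complex.ofReal_sinh]
    push_cast [-Complex.ofReal_sinh, -Complex.ofReal_cosh]
    linear_combination ((k : ℂ) * (b m : ℂ) - (k : ℂ) * (b i : ℂ)) *
      (Real.sinh s : ℂ) * Complex.I_sq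
  -- norms and limits
  have hbound : ∀ s : ℝ, ‖c m‖ ≤
      ∑ i ∈ Finset.univ.erase m, ‖c i‖ * Real.exp (k * (b m - b i) * Real.sinh s) := by
    intro s
    have hre : ∀ x y : ℝ, ((x : ℂ) + (y : ℂ) * I).re = x := by
      intro x y; simp
    have h1 := hkey s
    rw [← Finset.add_sum_erase _ _ (Finset.mem_univ m)] at h1
    have h2 := eq_neg_of_add_eq_zero_left h1
    have h3 : ‖c m‖ = ‖∑ i ∈ Finset.univ.erase m, c i *
        Complex.exp (((k * (b m - b i) * Real.sinh s : ℝ) : ℂ) +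
          ((k * a i * Real.cosh s : ℝ) : ℂ) * I)‖ := by
      calc ‖c m‖ = ‖c m * Complex.exp (((k * (b m - b m) * Real.sinh s : ℝ) : ℂ) +
            ((k * a m * Real.cosh s : ℝ) : ℂ) * I)‖ := by
              rw [norm_mul, Complex.norm_exp, hre,
                sub_self, mul_zero, zero_mul, Real.exp_zero, mul_one]
        _ = _ := by rw [h2, norm_neg]
    rw [h3]
    refine le_trans (norm_sum_le _ _) ?_
    apply Finset.sum_le_sum
    intro i _
    rw [norm_mul, Complex.norm_exp, hre]
  have hsinh : Filter.Tendsto Real.sinh Filter.atTop Filter.atTop := by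
    apply Filter.tendsto_atTop_mono' _ _ Filter.tendsto_id
    filter_upwards [Filter.eventually_gt_atTop (0:ℝ)] with x hx
    exact (Real.self_lt_sinh_iff.2 hx).le
  have hlim : Filter.Tendsto (fun s : ℝ => ∑ i ∈ Finset.univ.erase m,
      ‖c i‖ * Real.exp (k * (b m - b i) * Real.sinh s)) Filter.atTop (nhds 0) := by
    have h0 : (0:ℝ) = ∑ _i ∈ Finset.univ.erase m, (0:ℝ) := by simp
    rw [h0]
    apply tendsto_finset_sum
    intro i hi
    by_cases hci : c i = 0
    · simp only [hci, norm_zero, zero_mul]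
      exact tendsto_const_nhds
    · have hiS : i ∈ S := by simp [hS_def, hci]
      have him : i ≠ m := Finset.ne_of_mem_erase hi
      have hlt : k * (b m - b i) < 0 := by
        have hle : -(k * b i) ≤ -(k * b m) := hm i hiS
        have hne : -(k * b i) ≠ -(k * b m) := by
          intro h
          have hbb : k * b i = k * b m := by linarith
          exact hw_sep i m him (mul_left_cancel₀ hk hbb)
        have : -(k * b i) < -(k * b m) := lt_of_le_of_ne hle hne
        nlinarith
      have htendexp : Filter.Tendsto (fun s : ℝ => Real.exp (k * (b m - b i) * Real.sinh s))
          Filter.atTop (nhds 0) :=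
        Real.tendsto_exp_atBot.comp (Filter.Tendsto.const_mul_atTop_of_neg hlt hsinh)
      have := htendexp.const_mul ‖c i‖
      simpa using this
  have hfin : ‖c m‖ ≤ 0 := ge_of_tendsto' hlim hbound
  exact hcm (norm_le_zero_iff.1 hfin)
end
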